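/- (Pitt's theorem) Let p, r ∈ [1, ∞) with r > p. Then every bounded linear operator A : ℓ^r → ℓ^p is a compact operator. -/

import Mathlib

open scoped ENNReal
open Finset Filter
set_option maxHeartbeats 1000000

namespace PittAux

noncomputable section

variable {q : ℝ≥0∞}

/-- Truncation to the first `N` coordinates. -/
def trunc (q : ℝ≥0∞) (N : ℕ) (x : lp (fun _ : ℕ => ℝ) q) : lp (fun _ : ℕ => ℝ) q :=
  ∑ i ∈ Finset.range N, lp.single q i (x i)

lemma trunc_apply (N : ℕ) (x : lp (fun _ : ℕ => ℝ) q) (i : ℕ) :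
    trunc q N x i = if i < N then x i else 0 := by
  simp only [trunc, lp.coeFn_sum, Finset.sum_apply, lp.single_apply, Finset.sum_dite_eq,
    Finset.mem_range, Pi.single_apply, Finset.sum_ite_eq]

lemma norm_trunc_le (hq : 0 < q.toReal) (N : ℕ) (x : lp (fun _ : ℕ => ℝ) q) :
    ‖trunc q N x‖ ≤ ‖x‖ := by
  rw [← Real.rpow_le_rpow_iff (lp.norm_nonneg' _) (lp.norm_nonneg' _) hq]
  rw [show trunc q N x = ∑ i ∈ Finset.range N, lp.single q i (x i) from rfl]
  rw [lp.norm_sum_single hq]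
  exact lp.sum_rpow_le_norm_rpow hq x _

lemma norm_tail_le (hq : 0 < q.toReal) (N : ℕ) (x : lp (fun _ : ℕ => ℝ) q) :
    ‖x - trunc q N x‖ ≤ ‖x‖ := by
  rw [← Real.rpow_le_rpow_iff (lp.norm_nonneg' _) (lp.norm_nonneg' _) hq]
  rw [show trunc q N x = ∑ i ∈ Finset.range N, lp.single q i (x i) from rfl,
    lp.norm_compl_sum_single hq]
  have : 0 ≤ ∑ i ∈ Finset.range N, ‖x i‖ ^ q.toReal :=
    Finset.sum_nonneg fun i _ => Real.rpow_nonneg (norm_nonneg _) _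
  linarith

lemma exists_tail_small (hq : 0 < q.toReal) (x : lp (fun _ : ℕ => ℝ) q) {ε : ℝ} (hε : 0 < ε) :
    ∃ N : ℕ, ∀ M, N ≤ M → ‖x - trunc q M x‖ ≤ ε := by
  have hs := (lp.hasSum_norm hq x).tendsto_sum_nat
  have hεq : 0 < ε ^ q.toReal := Real.rpow_pos_of_pos hε _
  have := hs.eventually (eventually_gt_nhds (by linarith : ‖x‖ ^ q.toReal - ε ^ q.toReal
    < ‖x‖ ^ q.toReal))
  obtain ⟨N, hN⟩ := this.exists_forall_of_atTop
  refine ⟨N, fun M hM => ?_⟩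
  rw [← Real.rpow_le_rpow_iff (lp.norm_nonneg' _) hε.le hq,
    show trunc q M x = ∑ i ∈ Finset.range M, lp.single q i (x i) from rfl,
    lp.norm_compl_sum_single hq]
  have := hN M hM
  linarith

/-- The norm of a sum of disjointly supported elements. -/
lemma norm_sum_disjoint (hq : 0 < q.toReal) (u : ℕ → lp (fun _ : ℕ => ℝ) q) (m : ℕ)
    (hd : ∀ k < m, ∀ l < m, k ≠ l → ∀ i, u k i = 0 ∨ u l i = 0) :
    ‖(∑ k ∈ Finset.range m, u k)‖ ^ q.toReal = ∑ k ∈ Finset.range m, ‖u k‖ ^ q.toReal := by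
  rw [lp.norm_rpow_eq_tsum hq]
  have h1 : ∀ i, ‖(∑ k ∈ Finset.range m, u k) i‖ ^ q.toReal
      = ∑ k ∈ Finset.range m, ‖u k i‖ ^ q.toReal := by
    intro i
    rw [lp.coeFn_sum, Finset.sum_apply]
    by_cases hex : ∃ k ∈ Finset.range m, u k i ≠ 0
    · obtain ⟨k0, hk0m, hk0⟩ := hex
      have hz : ∀ l ∈ Finset.range m, l ≠ k0 → u l i = 0 := by
        intro l hl hlk
        rcases hd l (Finset.mem_range.1 hl) k0 (Finset.mem_range.1 hk0m) hlk i with h | h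
        · exact h
        · exact absurd h hk0
      rw [Finset.sum_eq_single_of_mem k0 hk0m (fun l hl hlk => hz l hl hlk)]
      rw [Finset.sum_eq_single_of_mem k0 hk0m (fun l hl hlk => by
        rw [hz l hl hlk, norm_zero, Real.zero_rpow hq.ne'])]
    · push_neg at hex
      rw [Finset.sum_eq_zero hex, Finset.sum_eq_zero (fun l hl => by
        rw [hex l hl, norm_zero, Real.zero_rpow hq.ne'])]
      simp [Real.zero_rpow hq.ne']
  rw [tsum_congr h1, Summable.tsum_finsetSum (fun k _ => ((lp.memℓp (u k)).summable hq))]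
  exact Finset.sum_congr rfl fun k _ => (lp.norm_rpow_eq_tsum hq (u k)).symm

lemma norm_sum_disjoint_le (hq : 0 < q.toReal) (u : ℕ → lp (fun _ : ℕ => ℝ) q) (m : ℕ)
    (hd : ∀ k < m, ∀ l < m, k ≠ l → ∀ i, u k i = 0 ∨ u l i = 0)
    (hu : ∀ k < m, ‖u k‖ ≤ 1) :
    ‖(∑ k ∈ Finset.range m, u k)‖ ≤ (m : ℝ) ^ (1 / q.toReal) := by
  have hm : (0:ℝ) ≤ (m:ℝ) := Nat.cast_nonneg m
  have key : ‖(∑ k ∈ Finset.range m, u k)‖ ^ q.toReal ≤ ((m:ℝ) ^ (1 / q.toReal)) ^ q.toReal := by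
    rw [← Real.rpow_mul hm, one_div, inv_mul_cancel₀ hq.ne', Real.rpow_one,
      norm_sum_disjoint hq u m hd]
    calc ∑ k ∈ Finset.range m, ‖u k‖ ^ q.toReal
        ≤ ∑ _k ∈ Finset.range m, (1:ℝ) := Finset.sum_le_sum fun k hk =>
          Real.rpow_le_one (lp.norm_nonneg' _) (hu k (Finset.mem_range.1 hk)) hq.le
      _ = m := by simp
  exact (Real.rpow_le_rpow_iff (lp.norm_nonneg' _) (Real.rpow_nonneg hm _) hq).1 key

lemma le_norm_sum_disjoint (hq : 0 < q.toReal) (u : ℕ → lp (fun _ : ℕ => ℝ) q) (m : ℕ)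
    (hd : ∀ k < m, ∀ l < m, k ≠ l → ∀ i, u k i = 0 ∨ u l i = 0)
    {c : ℝ} (hc : 0 ≤ c) (hu : ∀ k < m, c ≤ ‖u k‖) :
    (m : ℝ) ^ (1 / q.toReal) * c ≤ ‖(∑ k ∈ Finset.range m, u k)‖ := by
  have hm : (0:ℝ) ≤ (m:ℝ) := Nat.cast_nonneg m
  have hlhs : 0 ≤ (m:ℝ) ^ (1 / q.toReal) * c :=
    mul_nonneg (Real.rpow_nonneg hm _) hc
  have key : ((m:ℝ) ^ (1 / q.toReal) * c) ^ q.toReal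
      ≤ ‖(∑ k ∈ Finset.range m, u k)‖ ^ q.toReal := by
    rw [Real.mul_rpow (Real.rpow_nonneg hm _) hc, ← Real.rpow_mul hm, one_div,
      inv_mul_cancel₀ hq.ne', Real.rpow_one, norm_sum_disjoint hq u m hd]
    calc (m:ℝ) * c ^ q.toReal = ∑ _k ∈ Finset.range m, c ^ q.toReal := by
          simp [mul_comm]
      _ ≤ ∑ k ∈ Finset.range m, ‖u k‖ ^ q.toReal := Finset.sum_le_sum fun k hk =>
          Real.rpow_le_rpow hc (hu k (Finset.mem_range.1 hk)) hq.le
  exact (Real.rpow_le_rpow_iff hlhs (lp.norm_nonneg' _) hq).1 key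

lemma norm_trunc_le_sum_abs [Fact (1 ≤ q)] (hq : 0 < q.toReal) (N : ℕ) (x : lp (fun _ : ℕ => ℝ) q) :
    ‖trunc q N x‖ ≤ ∑ j ∈ Finset.range N, |x j| := by
  rw [show trunc q N x = ∑ i ∈ Finset.range N, lp.single q i (x i) from rfl]
  calc ‖∑ i ∈ Finset.range N, lp.single q i (x i)‖
      ≤ ∑ j ∈ Finset.range N, ‖lp.single (E := fun _ : ℕ => ℝ) q j (x j)‖ := norm_sum_le _ _
    _ ≤ ∑ j ∈ Finset.range N, |x j| := by
        refine Finset.sum_le_sum fun j _ => ?_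
        rw [lp.norm_single (ENNReal.toReal_pos_iff.1 hq).1, Real.norm_eq_abs]

lemma arith {C c ε a b : ℝ} (hε : 0 < ε) (_hC : 0 ≤ C) (hc : 0 ≤ c) (hb : 0 ≤ b) (hab : b < a)
    (h : ∀ m : ℕ, 1 ≤ m → ε * (m : ℝ) ^ a ≤ C * (m : ℝ) ^ b + c) : False := by
  have h2 : ∀ m : ℕ, 1 ≤ m → (m : ℝ) ^ (a - b) ≤ (C + c) / ε := by
    intro m hm
    have hm1 : (1:ℝ) ≤ (m:ℝ) := by exact_mod_cast hm
    have hm0 : (0:ℝ) < (m:ℝ) := by linarith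
    have hmb : (1:ℝ) ≤ (m:ℝ) ^ b := Real.one_le_rpow hm1 hb
    have hmab : (0:ℝ) < (m:ℝ) ^ (a - b) := Real.rpow_pos_of_pos hm0 _
    have key := h m hm
    rw [show a = b + (a - b) by ring, Real.rpow_add hm0] at key
    have : ε * ((m:ℝ) ^ b * (m:ℝ) ^ (a - b)) ≤ (C + c) * (m:ℝ) ^ b := by
      have : c ≤ c * (m:ℝ) ^ b := le_mul_of_one_le_right hc hmb
      nlinarith
    rw [le_div_iff₀ hε]
    have hmbpos : (0:ℝ) < (m:ℝ) ^ b := by linarith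
    calc (m:ℝ) ^ (a-b) * ε = ε * ((m:ℝ) ^ b * (m:ℝ) ^ (a-b)) / (m:ℝ) ^ b := by
          field_simp
      _ ≤ (C + c) * (m:ℝ) ^ b / (m:ℝ) ^ b := by gcongr
      _ = C + c := by field_simp
  have htend : Tendsto (fun m : ℕ => (m : ℝ) ^ (a - b)) atTop atTop :=
    (tendsto_rpow_atTop (by linarith)).comp tendsto_natCast_atTop_atTop
  obtain ⟨m, hm1, hm2⟩ := ((htend.eventually_gt_atTop ((C + c) / ε)).and
    (eventually_ge_atTop 1)).exists
  exact absurd (h2 m hm2) (not_le.2 hm1)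


/-- Evaluation at a coordinate, as a continuous linear map. -/
def coordCLM (q : ℝ≥0∞) [Fact (1 ≤ q)] (j : ℕ) : lp (fun _ : ℕ => ℝ) q →L[ℝ] ℝ :=
  LinearMap.mkContinuous
    { toFun := fun x => x j
      map_add' := fun x y => by simp [lp.coeFn_add]
      map_smul' := fun c x => by simp [lp.coeFn_smul] }
    1 (fun x => by
      have hq0 : q ≠ 0 := by
        have : (1:ℝ≥0∞) ≤ q := Fact.out
        intro h; rw [h] at this; exact absurd this (by simp)
      show ‖x j‖ ≤ 1 * ‖x‖
      simpa using lp.norm_apply_le_norm hq0 x j)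

@[simp] lemma coordCLM_apply [Fact (1 ≤ q)] (j : ℕ) (x : lp (fun _ : ℕ => ℝ) q) :
    coordCLM q j x = x j := rfl


lemma functional_tail {r : ℝ≥0∞} [Fact (1 ≤ r)] (hr1 : 1 < r.toReal)
    (φ : lp (fun _ : ℕ => ℝ) r →L[ℝ] ℝ) {ε : ℝ} (hε : 0 < ε) :
    ∃ N : ℕ, ∀ x : lp (fun _ : ℕ => ℝ) r, ‖x‖ ≤ 1 → (∀ i < N, x i = 0) → |φ x| ≤ ε := by
  have hrt : 0 < r.toReal := by linarith
  by_contra hcon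
  push_neg at hcon
  have step : ∀ D : ℕ, ∃ z : lp (fun _ : ℕ => ℝ) r × ℕ,
      ‖z.1‖ ≤ 1 ∧ (∀ i < D, z.1 i = 0) ∧ (∀ i, z.2 ≤ i → z.1 i = 0) ∧ D ≤ z.2 ∧ ε < φ z.1 := by
    intro D
    obtain ⟨x, hx1, hx2, hx3⟩ := hcon D
    obtain ⟨y, hy1, hy2, hy3⟩ : ∃ y : lp (fun _ : ℕ => ℝ) r,
        ‖y‖ ≤ 1 ∧ (∀ i < D, y i = 0) ∧ ε < φ y := by
      rcases le_or_gt 0 (φ x) with h | h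
      · exact ⟨x, hx1, hx2, by rwa [abs_of_nonneg h] at hx3⟩
      · refine ⟨-x, by rwa [norm_neg], fun i hi => by simp [lp.coeFn_neg, hx2 i hi], ?_⟩
        rw [map_neg]; rwa [abs_of_neg h] at hx3
    have hφn : (0:ℝ) ≤ ‖φ‖ := norm_nonneg _
    have hyε : 0 < φ y - ε := by linarith
    set δ := (φ y - ε) / (2 * (‖φ‖ + 1)) with hδ
    have hδpos : 0 < δ := by positivity
    obtain ⟨N0, hN0⟩ := exists_tail_small hrt y hδpos
    refine ⟨⟨trunc r (max N0 D) y, max N0 D⟩, ?_, ?_, ?_, le_max_right _ _, ?_⟩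
    · exact (norm_trunc_le hrt _ y).trans hy1
    · intro i hi; rw [trunc_apply]
      split
      · exact hy2 i hi
      · rfl
    · intro i hi; rw [trunc_apply, if_neg (by omega)]
    · have h1 : ‖y - trunc r (max N0 D) y‖ ≤ δ := hN0 _ (le_max_left _ _)
      have h2 : |φ (y - trunc r (max N0 D) y)| ≤ ‖φ‖ * δ := by
        calc |φ (y - trunc r (max N0 D) y)| ≤ ‖φ‖ * ‖y - trunc r (max N0 D) y‖ := φ.le_opNorm _
          _ ≤ ‖φ‖ * δ := by gcongr
      have h3 : φ (trunc r (max N0 D) y) = φ y - φ (y - trunc r (max N0 D) y) := by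
        rw [map_sub]; ring
      have h4 : ‖φ‖ * δ < φ y - ε := by
        rw [hδ]
        have h5 : ‖φ‖ / (2 * (‖φ‖ + 1)) < 1 := by
          rw [div_lt_one (by positivity)]; linarith
        calc ‖φ‖ * ((φ y - ε) / (2 * (‖φ‖ + 1)))
            = ‖φ‖ / (2 * (‖φ‖ + 1)) * (φ y - ε) := by ring
          _ < 1 * (φ y - ε) := by exact mul_lt_mul_of_pos_right h5 hyε
          _ = φ y - ε := one_mul _
      have h6 := (abs_le.1 h2).2
      rw [h3]; linarith
  choose f hf1 hf2 hf3 hf4 hf5 using step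
  set g : ℕ → lp (fun _ : ℕ => ℝ) r × ℕ :=
    fun k => Nat.rec (f 0) (fun _ prev => f prev.2) k with hg
  set u : ℕ → lp (fun _ : ℕ => ℝ) r := fun k => (g k).1 with hu
  set Dc : ℕ → ℕ := fun k => (g k).2 with hDc
  have hgs : ∀ k, g (k + 1) = f (Dc k) := fun k => rfl
  have hg0 : g 0 = f 0 := rfl
  have hDmono : Monotone Dc := monotone_nat_of_le_succ (fun k => by
    have := hf4 (Dc k)
    simpa only [hDc, hgs k] using this)
  have hu1 : ∀ k, ‖u k‖ ≤ 1 := by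
    intro k; cases k with
    | zero => exact hf1 0
    | succ n => exact hf1 (Dc n)
  have huhi : ∀ k i, Dc k ≤ i → u k i = 0 := by
    intro k; cases k with
    | zero => exact hf3 0
    | succ n => exact hf3 (Dc n)
  have hulo : ∀ k i, i < Dc k → u (k + 1) i = 0 := fun k i hi => hf2 (Dc k) i hi
  have hφu : ∀ k, ε < φ (u k) := by
    intro k; cases k with
    | zero => exact hf5 0
    | succ n => exact hf5 (Dc n)
  have hdis : ∀ k l, k < l → ∀ i, u k i = 0 ∨ u l i = 0 := by
    intro k l hkl i
    by_cases hik : Dc k ≤ i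
    · exact Or.inl (huhi k i hik)
    · right
      obtain ⟨l', rfl⟩ : ∃ l', l = l' + 1 := ⟨l - 1, by omega⟩
      exact hulo l' i (lt_of_lt_of_le (not_le.1 hik) (hDmono (by omega : k ≤ l')))
  have hdis' : ∀ m, ∀ k < m, ∀ l < m, k ≠ l → ∀ i, u k i = 0 ∨ u l i = 0 := by
    intro m k _ l _ hkl i
    rcases hkl.lt_or_gt with h | h
    · exact hdis k l h i
    · exact (hdis l k h i).symm
  refine arith (C := ‖φ‖) (c := 0) (ε := ε) (a := 1) (b := 1 / r.toReal) hε (norm_nonneg φ)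
    le_rfl (by positivity) (by rw [div_lt_one hrt]; exact hr1) ?_
  intro m hm
  set s := ∑ k ∈ Finset.range m, u k with hs
  have hsle : ‖s‖ ≤ (m : ℝ) ^ (1 / r.toReal) :=
    norm_sum_disjoint_le hrt u m (hdis' m) (fun k _ => hu1 k)
  have h1 : ε * m ≤ φ s := by
    rw [hs, map_sum]
    calc ε * m = ∑ _k ∈ Finset.range m, ε := by
          rw [Finset.sum_const, Finset.card_range, nsmul_eq_mul]; ring
      _ ≤ ∑ k ∈ Finset.range m, φ (u k) := Finset.sum_le_sum fun k _ => (hφu k).le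
  have h2 : φ s ≤ ‖φ‖ * ‖s‖ := (le_abs_self _).trans (φ.le_opNorm s)
  have h3 : ‖φ‖ * ‖s‖ ≤ ‖φ‖ * (m : ℝ) ^ (1 / r.toReal) := by
    apply mul_le_mul_of_nonneg_left hsle (norm_nonneg φ)
  rw [Real.rpow_one, add_zero]
  linarith


lemma main_tail {p r : ℝ≥0∞} [Fact (1 ≤ p)] [Fact (1 ≤ r)]
    (hp : p ≠ ⊤) (hr : r ≠ ⊤) (hpr : p < r)
    (A : lp (fun _ : ℕ => ℝ) r →L[ℝ] lp (fun _ : ℕ => ℝ) p) {ε : ℝ} (hε : 0 < ε) :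
    ∃ N : ℕ, ∀ x : lp (fun _ : ℕ => ℝ) r,
      ‖x‖ ≤ 1 → (∀ i < N, x i = 0) → ‖A x‖ ≤ ε := by
  have hpt1 : 1 ≤ p.toReal := by
    rw [← ENNReal.toReal_one]; exact ENNReal.toReal_mono hp Fact.out
  have hptrt : p.toReal < r.toReal := (ENNReal.toReal_lt_toReal hp hr).2 hpr
  have hpt : 0 < p.toReal := by linarith
  have hrt : 0 < r.toReal := by linarith
  have hrt1 : 1 < r.toReal := by linarith
  by_contra hcon
  push_neg at hcon
  have step : ∀ (D R k : ℕ), ∃ z : (lp (fun _ : ℕ => ℝ) r) × (lp (fun _ : ℕ => ℝ) p) × ℕ × ℕ,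
      ‖z.1‖ ≤ 1 ∧ (∀ i < D, z.1 i = 0) ∧ (∀ i, z.2.2.1 ≤ i → z.1 i = 0) ∧ D ≤ z.2.2.1 ∧
      R ≤ z.2.2.2 ∧ (∀ i, i < R → z.2.1 i = 0) ∧ (∀ i, z.2.2.2 ≤ i → z.2.1 i = 0) ∧
      ‖A z.1 - z.2.1‖ ≤ ε / 2 ^ k / 8 ∧ ε / 2 ≤ ‖z.2.1‖ := by
    intro D R k
    set δ := ε / 2 ^ k / 8 with hδdef
    have h2k : (1:ℝ) ≤ 2 ^ k := one_le_pow₀ one_le_two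
    have hδpos : 0 < δ := by positivity
    have hδε : δ ≤ ε / 8 := by
      rw [hδdef]
      gcongr
      exact div_le_self hε.le h2k
    set η := δ / (2 * (R + 1)) with hηdef
    have hηpos : 0 < η := by positivity
    have hNj : ∀ j : ℕ, ∃ N : ℕ, ∀ x : lp (fun _ : ℕ => ℝ) r,
        ‖x‖ ≤ 1 → (∀ i < N, x i = 0) → |((coordCLM p j).comp A) x| ≤ η := fun j =>
      functional_tail hrt1 ((coordCLM p j).comp A) hηpos
    choose Nf hNf using hNj
    set N0 := (Finset.range R).sup Nf with hN0def
    obtain ⟨x, hx1, hx2, hx3⟩ := hcon (max D N0)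
    have hAx : 0 < ‖A x‖ - ε := by linarith
    set δ' := (‖A x‖ - ε) / (2 * (‖A‖ + 1)) with hδ'def
    have hA0 : (0:ℝ) ≤ ‖A‖ := norm_nonneg A
    have hδ'pos : 0 < δ' := by positivity
    obtain ⟨M0, hM0⟩ := exists_tail_small hrt x hδ'pos
    set M := max M0 (max D N0) with hMdef
    set u := trunc r M x with hudef
    have hu1 : ‖u‖ ≤ 1 := (norm_trunc_le hrt M x).trans hx1
    have huc : ∀ i, u i = if i < M then x i else 0 := trunc_apply M x
    have hulo : ∀ i, i < max D N0 → u i = 0 := by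
      intro i hi; rw [huc i]
      split
      · exact hx2 i hi
      · rfl
    have huhi : ∀ i, M ≤ i → u i = 0 := fun i hi => by rw [huc i, if_neg (by omega)]
    have hxu : ‖x - u‖ ≤ δ' := hM0 M (le_max_left _ _)
    have hAu : ε < ‖A u‖ := by
      have h2 : ‖A x - A u‖ ≤ ‖A‖ * δ' := by
        rw [← map_sub]
        exact (A.le_opNorm _).trans (by gcongr)
      have h5 : ‖A‖ / (2 * (‖A‖ + 1)) < 1 := by
        rw [div_lt_one (by positivity)]; linarith
      have h3 : ‖A‖ * δ' < ‖A x‖ - ε := by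
        rw [hδ'def]
        calc ‖A‖ * ((‖A x‖ - ε) / (2 * (‖A‖ + 1)))
            = ‖A‖ / (2 * (‖A‖ + 1)) * (‖A x‖ - ε) := by ring
          _ < 1 * (‖A x‖ - ε) := mul_lt_mul_of_pos_right h5 hAx
          _ = ‖A x‖ - ε := one_mul _
      have h4 : ‖A x‖ - ‖A u‖ ≤ ‖A x - A u‖ := norm_sub_norm_le _ _
      linarith
    have hcoord : ∀ j, j < R → |(A u : ∀ _ : ℕ, ℝ) j| ≤ η := by
      intro j hj
      have hj' : Nf j ≤ N0 := Finset.le_sup (Finset.mem_range.2 hj)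
      have := hNf j u hu1 (fun i hi =>
        hulo i (lt_of_lt_of_le hi (hj'.trans (le_max_right D N0))))
      simpa using this
    obtain ⟨R0, hR0⟩ := exists_tail_small hpt (A u) (half_pos hδpos)
    set R' := max R0 R with hR'def
    set w := trunc p R' (A u) - trunc p R (A u) with hwdef
    have hwc : ∀ i, (w : ∀ _ : ℕ, ℝ) i
        = (if i < R' then (A u : ∀ _ : ℕ, ℝ) i else 0)
          - (if i < R then (A u : ∀ _ : ℕ, ℝ) i else 0) := by
      intro i
      rw [hwdef, lp.coeFn_sub, Pi.sub_apply, trunc_apply, trunc_apply]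
    have htruncR : ‖trunc p R (A u)‖ ≤ δ / 2 := by
      refine (norm_trunc_le_sum_abs hpt R (A u)).trans ?_
      calc ∑ j ∈ Finset.range R, |(A u : ∀ _ : ℕ, ℝ) j|
          ≤ ∑ _j ∈ Finset.range R, η := Finset.sum_le_sum fun j hj =>
            hcoord j (Finset.mem_range.1 hj)
        _ = R * η := by rw [Finset.sum_const, Finset.card_range, nsmul_eq_mul]
        _ ≤ (R + 1) * η := by nlinarith [hηpos.le]
        _ = δ / 2 := by rw [hηdef]; field_simp
    have happ : ‖A u - w‖ ≤ δ := by
      have hsplit : A u - w = (A u - trunc p R' (A u)) + trunc p R (A u) := by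
        rw [hwdef]; abel
      rw [hsplit]
      calc ‖(A u - trunc p R' (A u)) + trunc p R (A u)‖
          ≤ ‖A u - trunc p R' (A u)‖ + ‖trunc p R (A u)‖ := norm_add_le _ _
        _ ≤ δ / 2 + δ / 2 := add_le_add (hR0 R' (le_max_left _ _)) htruncR
        _ = δ := by ring
    refine ⟨⟨u, w, M, R'⟩, hu1,
      fun i hi => hulo i (lt_of_lt_of_le hi (le_max_left D N0)), huhi,
      (le_max_left D N0).trans (le_max_right M0 _), le_max_right R0 R, ?_, ?_, happ, ?_⟩
    · intro i hi
      rw [hwc i, if_pos (lt_of_lt_of_le hi (le_max_right R0 R)), if_pos hi, sub_self]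
    · intro i hi
      have hi' : R' ≤ i := hi
      have hRR' : R ≤ R' := le_max_right R0 R
      rw [hwc i, if_neg (by omega), if_neg (by omega), sub_self]
    · have h4 : ‖A u‖ - ‖w‖ ≤ ‖A u - w‖ := norm_sub_norm_le _ _
      linarith
  choose f hf1 hf2 hf3 hf4 hf5 hf6 hf7 hf8 hf9 using step
  set g : ℕ → (lp (fun _ : ℕ => ℝ) r) × (lp (fun _ : ℕ => ℝ) p) × ℕ × ℕ :=
    fun k => Nat.rec (f 0 0 0) (fun n prev => f prev.2.2.1 prev.2.2.2 (n + 1)) k with hgdef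
  set u : ℕ → lp (fun _ : ℕ => ℝ) r := fun k => (g k).1 with hudef
  set w : ℕ → lp (fun _ : ℕ => ℝ) p := fun k => (g k).2.1 with hwdef
  set Mc : ℕ → ℕ := fun k => (g k).2.2.1 with hMcdef
  set Rc : ℕ → ℕ := fun k => (g k).2.2.2 with hRcdef
  have hu1 : ∀ k, ‖u k‖ ≤ 1 := by
    intro k; cases k with
    | zero => exact hf1 0 0 0
    | succ n => exact hf1 (Mc n) (Rc n) (n + 1)
  have huhi : ∀ k i, Mc k ≤ i → u k i = 0 := by
    intro k; cases k with
    | zero => exact hf3 0 0 0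
    | succ n => exact hf3 (Mc n) (Rc n) (n + 1)
  have hulo : ∀ k i, i < Mc k → u (k + 1) i = 0 := fun k => hf2 (Mc k) (Rc k) (k + 1)
  have hMmono : Monotone Mc := monotone_nat_of_le_succ fun k => hf4 (Mc k) (Rc k) (k + 1)
  have hRmono : Monotone Rc := monotone_nat_of_le_succ fun k => hf5 (Mc k) (Rc k) (k + 1)
  have hwlo : ∀ k i, i < Rc k → w (k + 1) i = 0 := fun k => hf6 (Mc k) (Rc k) (k + 1)
  have hwhi : ∀ k i, Rc k ≤ i → w k i = 0 := by
    intro k; cases k with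
    | zero => exact hf7 0 0 0
    | succ n => exact hf7 (Mc n) (Rc n) (n + 1)
  have happrox : ∀ k, ‖A (u k) - w k‖ ≤ ε / 2 ^ k / 8 := by
    intro k; cases k with
    | zero => exact hf8 0 0 0
    | succ n => exact hf8 (Mc n) (Rc n) (n + 1)
  have hwnorm : ∀ k, ε / 2 ≤ ‖w k‖ := by
    intro k; cases k with
    | zero => exact hf9 0 0 0
    | succ n => exact hf9 (Mc n) (Rc n) (n + 1)
  have hdisu : ∀ m, ∀ k < m, ∀ l < m, k ≠ l → ∀ i, u k i = 0 ∨ u l i = 0 := by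
    have key : ∀ k l, k < l → ∀ i, u k i = 0 ∨ u l i = 0 := by
      intro k l hkl i
      by_cases hik : Mc k ≤ i
      · exact Or.inl (huhi k i hik)
      · right
        obtain ⟨l', rfl⟩ : ∃ l', l = l' + 1 := ⟨l - 1, by omega⟩
        exact hulo l' i (lt_of_lt_of_le (not_le.1 hik) (hMmono (by omega : k ≤ l')))
    intro m k _ l _ hkl i
    rcases hkl.lt_or_gt with h | h
    · exact key k l h i
    · exact (key l k h i).symm
  have hdisw : ∀ m, ∀ k < m, ∀ l < m, k ≠ l → ∀ i, w k i = 0 ∨ w l i = 0 := by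
    have key : ∀ k l, k < l → ∀ i, w k i = 0 ∨ w l i = 0 := by
      intro k l hkl i
      by_cases hik : Rc k ≤ i
      · exact Or.inl (hwhi k i hik)
      · right
        obtain ⟨l', rfl⟩ : ∃ l', l = l' + 1 := ⟨l - 1, by omega⟩
        exact hwlo l' i (lt_of_lt_of_le (not_le.1 hik) (hRmono (by omega : k ≤ l')))
    intro m k _ l _ hkl i
    rcases hkl.lt_or_gt with h | h
    · exact key k l h i
    · exact (key l k h i).symm
  refine arith (C := ‖A‖) (c := ε / 4) (ε := ε / 2) (a := 1 / p.toReal) (b := 1 / r.toReal)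
    (half_pos hε) (norm_nonneg A) (by positivity) (by positivity)
    (by rw [div_lt_div_iff₀ hrt hpt]; nlinarith) ?_
  intro m _
  set s := ∑ k ∈ Finset.range m, u k with hs
  set W := ∑ k ∈ Finset.range m, w k with hW
  have hsle : ‖s‖ ≤ (m : ℝ) ^ (1 / r.toReal) :=
    norm_sum_disjoint_le hrt u m (hdisu m) fun k _ => hu1 k
  have hAs : ‖A s‖ ≤ ‖A‖ * (m : ℝ) ^ (1 / r.toReal) :=
    (A.le_opNorm s).trans (by gcongr)
  have hWlow : (m : ℝ) ^ (1 / p.toReal) * (ε / 2) ≤ ‖W‖ :=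
    le_norm_sum_disjoint hpt w m (hdisw m) (half_pos hε).le fun k _ => hwnorm k
  have hWAs : ‖W - A s‖ ≤ ε / 4 := by
    have hrw : W - A s = ∑ k ∈ Finset.range m, (w k - A (u k)) := by
      rw [hW, hs, map_sum, ← Finset.sum_sub_distrib]
    rw [hrw]
    calc ‖∑ k ∈ Finset.range m, (w k - A (u k))‖
        ≤ ∑ k ∈ Finset.range m, ‖w k - A (u k)‖ := norm_sum_le _ _
      _ ≤ ∑ k ∈ Finset.range m, ε / 2 ^ k / 8 := Finset.sum_le_sum fun k _ => by
          rw [norm_sub_rev]; exact happrox k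
      _ = ε / 8 * ∑ k ∈ Finset.range m, (1 / 2 : ℝ) ^ k := by
          rw [Finset.mul_sum]
          refine Finset.sum_congr rfl fun k _ => ?_
          rw [div_pow, one_pow]
          ring
      _ ≤ ε / 8 * 2 := by
          have := sum_geometric_two_le m
          nlinarith
      _ = ε / 4 := by ring
  have hWle : ‖W‖ ≤ ‖A s‖ + ‖W - A s‖ := by
    calc ‖W‖ = ‖A s + (W - A s)‖ := by rw [add_sub_cancel]
      _ ≤ ‖A s‖ + ‖W - A s‖ := norm_add_le _ _
  calc ε / 2 * (m : ℝ) ^ (1 / p.toReal) = (m : ℝ) ^ (1 / p.toReal) * (ε / 2) := by ring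
    _ ≤ ‖W‖ := hWlow
    _ ≤ ‖A s‖ + ‖W - A s‖ := hWle
    _ ≤ ‖A‖ * (m : ℝ) ^ (1 / r.toReal) + ε / 4 := add_le_add hAs hWAs


lemma single_sub (q : ℝ≥0∞) (j : ℕ) (a b : ℝ) :
    lp.single (E := fun _ : ℕ => ℝ) q j (a - b) = lp.single q j a - lp.single q j b := by
  apply lp.ext
  funext i
  rw [lp.coeFn_sub, Pi.sub_apply]
  by_cases h : i = j
  · subst h
    rw [lp.single_apply_self, lp.single_apply_self, lp.single_apply_self]
  · rw [lp.single_apply_ne q j _ h, lp.single_apply_ne q j _ h, lp.single_apply_ne q j _ h,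
      sub_zero]

lemma continuous_single (q : ℝ≥0∞) [Fact (1 ≤ q)] (hq : 0 < q.toReal) (j : ℕ) :
    Continuous fun a : ℝ => lp.single (E := fun _ : ℕ => ℝ) q j a := by
  refine (LipschitzWith.of_dist_le_mul (K := 1) fun a b => ?_).continuous
  rw [dist_eq_norm, dist_eq_norm, ← single_sub]
  have h := lp.norm_single (E := fun _ : ℕ => ℝ) (ENNReal.toReal_pos_iff.1 hq).1 j (a - b)
  simp only [NNReal.coe_one, one_mul]
  exact le_of_eq h


end

end PittAux

open scoped ENNReal

/-- Pitt's theorem: for `p, r ∈ [1, ∞)` with `r > p`, every bounded linear operator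
`ℓ^r → ℓ^p` is compact (the image of the unit ball is relatively compact). -/
theorem stmt_5
    (p r : ℝ≥0∞) [Fact (1 ≤ p)] [Fact (1 ≤ r)]
    (hp : p ≠ ⊤) (hr : r ≠ ⊤) (hpr : p < r)
    (A : lp (fun _ : ℕ => ℝ) r →L[ℝ] lp (fun _ : ℕ => ℝ) p) :
    IsCompact (closure (⇑A '' Metric.closedBall 0 1)) := by
  have hpt1 : 1 ≤ p.toReal := by
    rw [← ENNReal.toReal_one]; exact ENNReal.toReal_mono hp Fact.out
  have hptrt : p.toReal < r.toReal := (ENNReal.toReal_lt_toReal hp hr).2 hpr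
  have hpt : 0 < p.toReal := by linarith
  have hrt : 0 < r.toReal := by linarith
  have hr0 : r ≠ 0 := by
    have h1 : (1 : ℝ≥0∞) ≤ r := Fact.out
    intro h; rw [h] at h1; exact absurd h1 (by simp)
  refine TotallyBounded.isCompact_of_isClosed ?_ isClosed_closure
  refine TotallyBounded.closure ?_
  rw [Metric.totallyBounded_iff]
  intro ε hε
  obtain ⟨N, hN⟩ := PittAux.main_tail hp hr hpr A (show (0:ℝ) < ε / 3 by linarith)
  set g : (Fin N → ℝ) → lp (fun _ : ℕ => ℝ) p :=
    fun c => A (∑ i : Fin N, lp.single r (i : ℕ) (c i)) with hg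
  have hgcont : Continuous g := by
    refine A.continuous.comp ?_
    refine continuous_finset_sum _ fun i _ => ?_
    exact (PittAux.continuous_single r hrt (i : ℕ)).comp (continuous_apply (i : Fin N))
  have hKcomp : IsCompact (g '' Metric.closedBall 0 1) :=
    (isCompact_closedBall (0 : Fin N → ℝ) 1).image hgcont
  obtain ⟨t, htfin, htcover⟩ :=
    Metric.totallyBounded_iff.1 hKcomp.totallyBounded (ε / 3) (by linarith)
  refine ⟨t, htfin, ?_⟩
  rintro y ⟨x, hx, rfl⟩
  have hx1 : ‖x‖ ≤ 1 := by rwa [Metric.mem_closedBall, dist_zero_right] at hx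
  have htail : ‖A x - A (PittAux.trunc r N x)‖ ≤ ε / 3 := by
    rw [← map_sub]
    refine hN _ ((PittAux.norm_tail_le hrt N x).trans hx1) fun i hi => ?_
    rw [lp.coeFn_sub, Pi.sub_apply, PittAux.trunc_apply, if_pos hi, sub_self]
  have hmem : A (PittAux.trunc r N x) ∈ g '' Metric.closedBall 0 1 := by
    refine ⟨fun i => x i, ?_, ?_⟩
    · rw [Metric.mem_closedBall, dist_zero_right]
      refine (pi_norm_le_iff_of_nonneg zero_le_one).2 fun i => ?_
      exact (lp.norm_apply_le_norm hr0 x (i : ℕ)).trans hx1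
    · rw [hg]
      rw [show PittAux.trunc r N x = ∑ i ∈ Finset.range N, lp.single r i (x i) from rfl,
        Finset.sum_range (fun i => lp.single (E := fun _ : ℕ => ℝ) r i (x i))]
  obtain ⟨z, hzt, hz⟩ := Set.mem_iUnion₂.1 (htcover hmem)
  refine Set.mem_iUnion₂.2 ⟨z, hzt, ?_⟩
  rw [Metric.mem_ball]
  have h1 : dist (A x) (A (PittAux.trunc r N x)) ≤ ε / 3 := by
    rw [dist_eq_norm]; exact htail
  have h2 : dist (A (PittAux.trunc r N x)) z < ε / 3 := Metric.mem_ball.1 hz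
  calc dist (A x) z ≤ dist (A x) (A (PittAux.trunc r N x)) + dist (A (PittAux.trunc r N x)) z :=
        dist_triangle _ _ _
    _ < ε := by linarith
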